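/- Let (Ω, ℱ, P) be a probability space, let m ≥ 0 be an integer, and let (A_k)_{k≥1} be a sequence of events such that for every k ≥ 1 and every n > m, the σ-algebras σ(A₁, …, A_k) and σ(A_j : j ≥ k+n) are independent. Then for any two finite index sets I, J ⊆ ℕ with min{|i − j| : i ∈ I, j ∈ J} > m, the σ-algebras σ(A_i : i ∈ I) and σ(A_j : j ∈ J) are independent. -/

import Mathlib

/-!
Let `c = max J` and suppose the largest index of `I ∪ J` lies in `I`. Separation splits `I`
into `I₀ < c` and `I₁ > c + m`. By induction `σ(I₀) ⊥ σ(J)`, and past–future independence at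
the gap after `c` gives `σ(I₀ ∪ J) ⊥ σ(I₁)`; together these yield `σ(I₀ ∪ I₁) ⊥ σ(J)`,
by a π-system argument on the sets `a ∩ b` with `a ∈ σ(I₀)`, `b ∈ σ(I₁)`.
-/

open MeasureTheory MeasurableSpace ProbabilityTheory Set

section SupIndep

variable {Ω : Type*} {mΩ : MeasurableSpace Ω} {μ : Measure Ω} [IsProbabilityMeasure μ]
  {m₀ m₁ m₂ : MeasurableSpace Ω}

theorem indep_sup_left_of_indep_of_indep_sup (h₀ : m₀ ≤ mΩ) (h₁ : m₁ ≤ mΩ) (h₂ : m₂ ≤ mΩ)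
    (h₀₂ : Indep m₀ m₂ μ) (h₀₂₁ : Indep (m₀ ⊔ m₂) m₁ μ) : Indep (m₀ ⊔ m₁) m₂ μ := by
  let p : Set (Set Ω) := image2 (· ∩ ·) {s | MeasurableSet[m₀] s} {s | MeasurableSet[m₁] s}
  have hp : IsPiSystem p := by
    rintro _ ⟨a, ha, b, hb, rfl⟩ _ ⟨c, hc, d, hd, rfl⟩ -
    exact ⟨a ∩ c, ha.inter hc, b ∩ d, hb.inter hd, (inter_inter_inter_comm a b c d).symm⟩
  have hgen : m₀ ⊔ m₁ = generateFrom p := by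
    refine le_antisymm (sup_le ?_ ?_) (generateFrom_le ?_)
    · exact fun a ha ↦ measurableSet_generateFrom ⟨a, ha, univ, .univ, inter_univ a⟩
    · exact fun b hb ↦ measurableSet_generateFrom ⟨univ, .univ, b, hb, univ_inter b⟩
    · rintro _ ⟨a, ha, b, hb, rfl⟩
      exact (le_sup_left (b := m₁) _ ha).inter (le_sup_right (a := m₀) _ hb)
  refine IndepSets.indep (sup_le h₀ h₁) h₂ hp (@isPiSystem_measurableSet Ω m₂) hgen
    (generateFrom_measurableSet).symm ?_
  rw [IndepSets_iff]
  rintro _ c ⟨a, ha, b, hb, rfl⟩ hc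
  rw [Indep_iff] at h₀₂ h₀₂₁
  have hac : MeasurableSet[m₀ ⊔ m₂] (a ∩ c) :=
    (le_sup_left (b := m₂) _ ha).inter (le_sup_right (a := m₀) _ hc)
  calc μ (a ∩ b ∩ c) = μ (a ∩ c ∩ b) := by rw [inter_right_comm]
    _ = μ a * μ c * μ b := by rw [h₀₂₁ _ _ hac hb, h₀₂ _ _ ha hc]
    _ = μ a * μ b * μ c := by ring
    _ = μ (a ∩ b) * μ c := by rw [h₀₂₁ _ _ (le_sup_left (b := m₂) _ ha) hb]

end SupIndep

section PastFuture

variable {Ω : Type*} [MeasurableSpace Ω]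

def PastFutureIndep (P : Measure Ω) (m : ℕ) (A : ℕ → Set Ω) : Prop :=
  ∀ k, 1 ≤ k → ∀ n, m < n →
    Indep (generateFrom (A '' Icc 1 k)) (generateFrom (A '' Ici (k + n))) P

theorem generateFrom_image_le {A : ℕ → Set Ω} (hA : ∀ k, 1 ≤ k → MeasurableSet (A k))
    {s : Set ℕ} (hs : s ⊆ Ici 1) : generateFrom (A '' s) ≤ ‹MeasurableSpace Ω› :=
  generateFrom_le <| forall_mem_image.2 fun k hk ↦ hA k (hs hk)

variable {P : Measure Ω} [IsProbabilityMeasure P] {m : ℕ} {A : ℕ → Set Ω}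

theorem PastFutureIndep.indep_of_indep_filter_lt_max' (hpf : PastFutureIndep P m A)
    (hA : ∀ k, 1 ≤ k → MeasurableSet (A k)) {I J : Finset ℕ} (hI : ↑I ⊆ Ici 1)
    (hJ : ↑J ⊆ Ici 1) (hIJ : ∀ i ∈ I, ∀ j ∈ J, m < Nat.dist i j) (hJne : J.Nonempty)
    (h₀ : Indep (generateFrom (A '' ↑(I.filter (· < J.max' hJne)))) (generateFrom (A '' ↑J)) P) :
    Indep (generateFrom (A '' ↑I)) (generateFrom (A '' ↑J)) P := by
  set c := J.max' hJne
  set I₀ := I.filter (· < c)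
  set I₁ := I.filter (¬ · < c)
  have hI₀ : (↑I₀ : Set ℕ) ⊆ Ici 1 := fun i hi ↦ hI (Finset.mem_filter.1 hi).1
  have hI₁ : (↑I₁ : Set ℕ) ⊆ Ici 1 := fun i hi ↦ hI (Finset.mem_filter.1 hi).1
  have hpast : (↑I₀ ∪ ↑J : Set ℕ) ⊆ Icc 1 c := by
    rintro i (hi | hi)
    · exact ⟨hI₀ hi, (Finset.mem_filter.1 hi).2.le⟩
    · exact ⟨hJ hi, J.le_max' i hi⟩
  have hfuture : (↑I₁ : Set ℕ) ⊆ Ici (c + (m + 1)) := by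
    intro i hi
    obtain ⟨hiI, hci⟩ := Finset.mem_filter.1 hi
    have := hIJ i hiI c (J.max'_mem hJne)
    rw [Nat.dist_comm, Nat.dist_eq_sub_of_le (not_lt.1 hci)] at this
    simp only [mem_Ici]
    omega
  have h₁ : Indep (generateFrom (A '' ↑I₀) ⊔ generateFrom (A '' ↑J))
      (generateFrom (A '' ↑I₁)) P := by
    rw [generateFrom_sup_generateFrom, ← image_union]
    exact indep_of_indep_of_le (hpf c (hJ (J.max'_mem hJne)) (m + 1) m.lt_succ_self)
      (generateFrom_mono (image_mono hpast)) (generateFrom_mono (image_mono hfuture))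
  have hsplit := indep_sup_left_of_indep_of_indep_sup (generateFrom_image_le hA hI₀)
    (generateFrom_image_le hA hI₁) (generateFrom_image_le hA hJ) h₀ h₁
  rwa [generateFrom_sup_generateFrom, ← image_union, ← Finset.coe_union,
    Finset.filter_union_filter_not_eq] at hsplit

theorem PastFutureIndep.indep_of_separated (hpf : PastFutureIndep P m A)
    (hA : ∀ k, 1 ≤ k → MeasurableSet (A k)) {I J : Finset ℕ} (hI : ↑I ⊆ Ici 1)
    (hJ : ↑J ⊆ Ici 1) (hIJ : ∀ i ∈ I, ∀ j ∈ J, m < Nat.dist i j) :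
    Indep (generateFrom (A '' ↑I)) (generateFrom (A '' ↑J)) P := by
  induction hn : I.card + J.card using Nat.strong_induction_on generalizing I J with
  | _ n ih =>
  rcases I.eq_empty_or_nonempty with rfl | hIne
  · simpa using indep_bot_left _
  rcases J.eq_empty_or_nonempty with rfl | hJne
  · simpa using indep_bot_right _
  wlog hlt : J.max' hJne < I.max' hIne generalizing I J
  · have hne : I.max' hIne ≠ J.max' hJne := fun h ↦ by
      simpa [h] using hIJ _ (I.max'_mem hIne) _ (J.max'_mem hJne)
    exact (this hJ hI (fun j hj i hi ↦ Nat.dist_comm i j ▸ hIJ i hi j hj) (by omega)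
      hJne hIne (lt_of_le_of_ne (not_lt.1 hlt) hne)).symm
  refine hpf.indep_of_indep_filter_lt_max' hA hI hJ hIJ hJne (ih _ ?_ ?_ hJ ?_ rfl)
  · have hmax : I.max' hIne ∉ I.filter (· < J.max' hJne) := fun h ↦
      (Finset.mem_filter.1 h).2.not_gt hlt
    have := Finset.card_lt_card ⟨Finset.filter_subset _ I, fun h ↦ hmax (h (I.max'_mem hIne))⟩
    omega
  · exact fun i hi ↦ hI (Finset.mem_filter.1 hi).1
  · exact fun i hi j hj ↦ hIJ i (Finset.mem_filter.1 hi).1 j hj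

end PastFuture

/-- Remark (m-dependence: past–future independence implies separated-subcollection
independence): if `σ(A 1, …, A k)` and `σ(A j : j ≥ k + n)` are independent for every
`k ≥ 1` and every `n > m`, then for any two finite index sets `I, J ⊆ {1, 2, …}` with
`dist(I, J) > m`, the σ-algebras `σ(A i : i ∈ I)` and `σ(A j : j ∈ J)` are independent. -/
theorem past_future_implies_separated_independence
    {Ω : Type*} [MeasurableSpace Ω] (P : Measure Ω) [IsProbabilityMeasure P]
    (m : ℕ) (A : ℕ → Set Ω) (hA : ∀ k, 1 ≤ k → MeasurableSet (A k))
    (hpf : ∀ k, 1 ≤ k → ∀ n, m < n →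
      ProbabilityTheory.Indep
        (MeasurableSpace.generateFrom (A '' Set.Icc 1 k))
        (MeasurableSpace.generateFrom (A '' Set.Ici (k + n))) P) :
    ∀ I J : Finset ℕ, ↑I ⊆ Set.Ici 1 → ↑J ⊆ Set.Ici 1 →
      (∀ i ∈ I, ∀ j ∈ J, m < Nat.dist i j) →
      ProbabilityTheory.Indep
        (MeasurableSpace.generateFrom (A '' ↑I))
        (MeasurableSpace.generateFrom (A '' ↑J)) P :=
  fun _ _ hI hJ hIJ ↦ PastFutureIndep.indep_of_separated hpf hA hI hJ hIJ
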